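/- Let (X₁,d₁), (X₂,d₂) be metric spaces and T_i : X_i → X_i uniformly continuous maps. With the max metric d on X₁ × X₂, the product map T₁ × T₂ is uniformly continuous and its Bowen topological entropy satisfies h_d(T₁ × T₂) ≤ h_{d₁}(T₁) + h_{d₂}(T₂). -/

import Mathlib

/-!
Let `K` be compact in `X₁ × X₂` and `K₁`, `K₂` its projections. A maximal `(n, ε/2)`-separated
subset `Fᵢ` of `Kᵢ` is `(n, ε/2)`-spanning, so `F₁ × F₂` is `(n, ε/2)`-spanning for `K` in the
max metric, and an `(n, ε)`-separated subset of `K` meets each `(n, ε/2)`-Bowen ball around a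
point of `F₁ × F₂` at most once. Hence `sepNum K n ε ≤ sepNum K₁ n (ε/2) * sepNum K₂ n (ε/2)`;
take logarithms, divide by `n` and pass to the `limsup`. The counts are finite because the
first `n` iterates are uniformly equicontinuous and `K` is totally bounded; this matters, since
`sepNum` is an `sSup` in `ℕ`, which is `0` for an unbounded set.
-/

open Filter Topology

section Defs
variable {Y : Type*} [PseudoMetricSpace Y]

/-- A finite set `E` is `(n, ε)`-separated for the map `f`. -/
def IsSep (f : Y → Y) (n : ℕ) (ε : ℝ) (E : Finset Y) : Prop :=
  ∀ x ∈ E, ∀ y ∈ E, x ≠ y → ∃ i < n, ε < dist (f^[i] x) (f^[i] y)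

/-- Maximal cardinality of an `(n, ε)`-separated subset of `K`. -/
noncomputable def sepNum (f : Y → Y) (K : Set Y) (n : ℕ) (ε : ℝ) : ℕ :=
  sSup {m : ℕ | ∃ E : Finset Y, ↑E ⊆ K ∧ IsSep f n ε E ∧ E.card = m}

/-- Bowen topological entropy of a (uniformly continuous) map on a metric space. -/
noncomputable def entBowen (f : Y → Y) : EReal :=
  ⨆ (K : Set Y) (_ : IsCompact K) (ε : ℝ) (_ : 0 < ε),
    limsup (fun n : ℕ => ((Real.log (sepNum f K n ε) / n : ℝ) : EReal)) atTop
end Defs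

section Separation

variable {Y : Type*} [PseudoMetricSpace Y] {f : Y → Y} {n : ℕ} {ε δ : ℝ} {K : Set Y}

def IsSpan (f : Y → Y) (n : ℕ) (δ : ℝ) (K : Set Y) (F : Finset Y) : Prop :=
  ∀ x ∈ K, ∃ y ∈ F, ∀ i < n, dist (f^[i] x) (f^[i] y) ≤ δ

lemma IsSpan.mono {F : Finset Y} {L : Set Y} (hF : IsSpan f n δ K F) (hLK : L ⊆ K) :
    IsSpan f n δ L F :=
  fun x hx => hF x (hLK hx)

lemma IsSpan.prodMap {Z : Type*} [PseudoMetricSpace Z] {g : Z → Z} {L : Set Z}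
    {F : Finset Y} {G : Finset Z} (hF : IsSpan f n δ K F) (hG : IsSpan g n δ L G) :
    IsSpan (Prod.map f g) n δ (K ×ˢ L) (F ×ˢ G) := by
  rintro ⟨x, z⟩ ⟨hx, hz⟩
  obtain ⟨y, hy, hxy⟩ := hF x hx
  obtain ⟨w, hw, hzw⟩ := hG z hz
  refine ⟨(y, w), Finset.mem_product.2 ⟨hy, hw⟩, fun i hi => ?_⟩
  rw [Prod.map_iterate, Prod.dist_eq]
  exact max_le (hxy i hi) (hzw i hi)

/-- Two points of an `(n, ε)`-separated set cannot share an `(n, ε/2)`-spanning center. -/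
lemma IsSpan.card_le_of_isSep {E F : Finset Y} (hF : IsSpan f n (ε / 2) K F) (hEK : ↑E ⊆ K)
    (hE : IsSep f n ε E) : E.card ≤ F.card := by
  choose! c hcF hc using hF
  refine Finset.card_le_card_of_injOn c (fun x hx => hcF x (hEK hx)) fun x hx y hy hxy => ?_
  by_contra hne
  obtain ⟨i, hi, hlt⟩ := hE x hx y hy hne
  have : dist (f^[i] x) (f^[i] y) ≤ ε / 2 + ε / 2 :=
    calc dist (f^[i] x) (f^[i] y)
        ≤ dist (f^[i] x) (f^[i] (c x)) + dist (f^[i] y) (f^[i] (c y)) := by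
          rw [hxy]; exact dist_triangle_right _ _ _
      _ ≤ ε / 2 + ε / 2 := add_le_add (hc x (hEK hx) i hi) (hc y (hEK hy) i hi)
  linarith

lemma IsSep.insert [DecidableEq Y] {E : Finset Y} {x : Y} (hE : IsSep f n ε E)
    (hx : ∀ y ∈ E, ∃ i < n, ε < dist (f^[i] x) (f^[i] y)) : IsSep f n ε (insert x E) := by
  intro a ha b hb hab
  rcases Finset.mem_insert.1 ha with rfl | haE <;> rcases Finset.mem_insert.1 hb with rfl | hbE
  · exact absurd rfl hab
  · exact hx b hbE
  · obtain ⟨i, hi, h⟩ := hx a haE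
    exact ⟨i, hi, by rwa [dist_comm]⟩
  · exact hE a haE b hbE hab

lemma UniformContinuous.exists_pos_forall_dist_iterate_lt (hf : UniformContinuous f) (n : ℕ)
    (hε : 0 < ε) : ∃ δ > 0, ∀ x y, dist x y < δ → ∀ i < n, dist (f^[i] x) (f^[i] y) < ε := by
  have hF : UniformContinuous fun x (i : Fin n) => f^[i] x :=
    uniformContinuous_pi.2 fun i => UniformContinuous.iterate f i hf
  obtain ⟨δ, hδ, H⟩ := Metric.uniformContinuous_iff.1 hF ε hε
  exact ⟨δ, hδ, fun x y hxy i hi => (dist_pi_lt_iff hε).1 (H hxy) ⟨i, hi⟩⟩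

lemma exists_isSpan (hf : UniformContinuous f) (hK : IsCompact K) (n : ℕ) (hδ : 0 < δ) :
    ∃ F : Finset Y, IsSpan f n δ K F := by
  obtain ⟨η, hη, H⟩ := hf.exists_pos_forall_dist_iterate_lt n hδ
  obtain ⟨t, -, ht, hKt⟩ := hK.finite_cover_balls hη
  refine ⟨ht.toFinset, fun x hx => ?_⟩
  obtain ⟨y, hy, hxy⟩ := Set.mem_iUnion₂.1 (hKt hx)
  exact ⟨y, ht.mem_toFinset.2 hy, fun i hi => (H x y hxy i hi).le⟩

lemma bddAbove_card_isSep (hf : UniformContinuous f) (hK : IsCompact K) (n : ℕ) (hε : 0 < ε) :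
    BddAbove {m : ℕ | ∃ E : Finset Y, ↑E ⊆ K ∧ IsSep f n ε E ∧ E.card = m} := by
  obtain ⟨F, hF⟩ := exists_isSpan hf hK n (half_pos hε)
  exact ⟨F.card, by rintro _ ⟨E, hEK, hE, rfl⟩; exact hF.card_le_of_isSep hEK hE⟩

lemma sepNum_le {m : ℕ} (h : ∀ E : Finset Y, ↑E ⊆ K → IsSep f n ε E → E.card ≤ m) :
    sepNum f K n ε ≤ m :=
  csSup_le ⟨0, ∅, by simp [IsSep]⟩ (by rintro _ ⟨E, hEK, hE, rfl⟩; exact h E hEK hE)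

/-- A maximal separated set is spanning at the same scale. -/
lemma exists_isSpan_card_eq_sepNum (hf : UniformContinuous f) (hK : IsCompact K) (n : ℕ)
    (hε : 0 < ε) : ∃ F : Finset Y, IsSpan f n ε K F ∧ F.card = sepNum f K n ε := by
  classical
  have hbdd := bddAbove_card_isSep hf hK n hε
  obtain ⟨F, hFK, hF, hcard⟩ := Nat.sSup_mem (by exact ⟨0, ∅, by simp [IsSep]⟩) hbdd
  refine ⟨F, fun x hx => ?_, hcard⟩
  by_contra! hfar
  have hxF : x ∉ F := fun h => by
    obtain ⟨i, -, hi⟩ := hfar x h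
    simp only [dist_self] at hi
    linarith
  have hle := le_csSup hbdd ⟨insert x F, by simpa using Set.insert_subset hx hFK,
    hF.insert hfar, rfl⟩
  rw [Finset.card_insert_of_notMem hxF, hcard] at hle
  exact (Nat.lt_succ_self _).not_ge hle

end Separation

lemma sepNum_prodMap_le {X₁ X₂ : Type*} [PseudoMetricSpace X₁] [PseudoMetricSpace X₂]
    {T₁ : X₁ → X₁} {T₂ : X₂ → X₂} (h₁ : UniformContinuous T₁) (h₂ : UniformContinuous T₂)
    {K : Set (X₁ × X₂)} (hK : IsCompact K) (n : ℕ) {ε : ℝ} (hε : 0 < ε) :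
    sepNum (Prod.map T₁ T₂) K n ε ≤
      sepNum T₁ (Prod.fst '' K) n (ε / 2) * sepNum T₂ (Prod.snd '' K) n (ε / 2) := by
  obtain ⟨F₁, hF₁, hcard₁⟩ :=
    exists_isSpan_card_eq_sepNum h₁ (hK.image continuous_fst) n (half_pos hε)
  obtain ⟨F₂, hF₂, hcard₂⟩ :=
    exists_isSpan_card_eq_sepNum h₂ (hK.image continuous_snd) n (half_pos hε)
  rw [← hcard₁, ← hcard₂, ← Finset.card_product]
  exact sepNum_le fun E hEK hE =>
    ((hF₁.prodMap hF₂).mono Set.subset_prod).card_le_of_isSep hEK hE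

lemma Real.log_natCast_le_add_of_le_mul {a b c : ℕ} (h : a ≤ b * c) :
    Real.log a ≤ Real.log b + Real.log c := by
  rcases Nat.eq_zero_or_pos a with rfl | ha
  · simpa using add_nonneg (Real.log_natCast_nonneg b) (Real.log_natCast_nonneg c)
  · have hbc : b * c ≠ 0 := (ha.trans_le h).ne'
    rw [← Real.log_mul (mod_cast left_ne_zero_of_mul hbc) (mod_cast right_ne_zero_of_mul hbc)]
    exact Real.log_le_log (mod_cast ha) (mod_cast h)

section Rate

variable {Y : Type*} [PseudoMetricSpace Y]

noncomputable def sepRate (f : Y → Y) (K : Set Y) (ε : ℝ) (n : ℕ) : EReal :=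
  ((Real.log (sepNum f K n ε) / n : ℝ) : EReal)

lemma sepRate_nonneg (f : Y → Y) (K : Set Y) (ε : ℝ) (n : ℕ) : 0 ≤ sepRate f K ε n :=
  EReal.coe_nonneg.2 (div_nonneg (Real.log_natCast_nonneg _) n.cast_nonneg)

lemma limsup_sepRate_nonneg (f : Y → Y) (K : Set Y) (ε : ℝ) :
    0 ≤ limsup (sepRate f K ε) atTop :=
  le_limsup_of_frequently_le (Frequently.of_forall (sepRate_nonneg f K ε))

lemma limsup_sepRate_le_entBowen (f : Y → Y) {K : Set Y} (hK : IsCompact K) {ε : ℝ}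
    (hε : 0 < ε) : limsup (sepRate f K ε) atTop ≤ entBowen f :=
  le_iSup₂_of_le K hK (le_iSup₂_of_le ε hε le_rfl)

end Rate

lemma sepRate_prodMap_le {X₁ X₂ : Type*} [PseudoMetricSpace X₁] [PseudoMetricSpace X₂]
    {T₁ : X₁ → X₁} {T₂ : X₂ → X₂} (h₁ : UniformContinuous T₁) (h₂ : UniformContinuous T₂)
    {K : Set (X₁ × X₂)} (hK : IsCompact K) {ε : ℝ} (hε : 0 < ε) (n : ℕ) :
    sepRate (Prod.map T₁ T₂) K ε n ≤
      sepRate T₁ (Prod.fst '' K) (ε / 2) n + sepRate T₂ (Prod.snd '' K) (ε / 2) n := by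
  rw [sepRate, sepRate, sepRate, ← EReal.coe_add, EReal.coe_le_coe_iff, ← add_div]
  exact div_le_div_of_nonneg_right
    (Real.log_natCast_le_add_of_le_mul (sepNum_prodMap_le h₁ h₂ hK n hε)) n.cast_nonneg

theorem entropy_prod_le
    {X₁ X₂ : Type*} [MetricSpace X₁] [MetricSpace X₂]
    (T₁ : X₁ → X₁) (T₂ : X₂ → X₂)
    (h₁ : UniformContinuous T₁) (h₂ : UniformContinuous T₂) :
    UniformContinuous (Prod.map T₁ T₂) ∧
      entBowen (Prod.map T₁ T₂) ≤ entBowen T₁ + entBowen T₂ := by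
  refine ⟨h₁.prodMap h₂, iSup₂_le fun K hK => iSup₂_le fun ε hε => ?_⟩
  set u := sepRate T₁ (Prod.fst '' K) (ε / 2)
  set v := sepRate T₂ (Prod.snd '' K) (ε / 2)
  have hu : limsup u atTop ≠ ⊥ := ne_bot_of_le_ne_bot (by simp) (limsup_sepRate_nonneg _ _ _)
  have hv : limsup v atTop ≠ ⊥ := ne_bot_of_le_ne_bot (by simp) (limsup_sepRate_nonneg _ _ _)
  calc limsup (sepRate (Prod.map T₁ T₂) K ε) atTop
      ≤ limsup (u + v) atTop :=
        limsup_le_limsup (Eventually.of_forall (sepRate_prodMap_le h₁ h₂ hK hε))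
    _ ≤ limsup u atTop + limsup v atTop := EReal.limsup_add_le (.inl hu) (.inr hv)
    _ ≤ entBowen T₁ + entBowen T₂ :=
        add_le_add (limsup_sepRate_le_entBowen T₁ (hK.image continuous_fst) (half_pos hε))
          (limsup_sepRate_le_entBowen T₂ (hK.image continuous_snd) (half_pos hε))
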